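/- If the block matrix inequality (13b) of Theorem 1 holds with Y = PL, P ≻ 0, ν₄ > 0, ν₁, ν₅, ν₆ ≥ 0, then for every e, Δf, Δh, w with ‖Δf‖ ≤ γ_f‖e‖ and ‖Δh‖ ≤ γ_l‖e‖, the inequality ėᵀPe + eᵀPė + ν₄ eᵀPe ≤ ν₄ν₁‖w‖² holds, where ė = (A - LC)e + Δf - LΔh + (B_w - LD_w)w. -/

import Mathlib

/-!
Evaluate the quadratic form of the (13b) matrix at `z = (e, Δf, Δh, w)`. Using `Y = P L` and the
symmetry of `P`, it equals the Lyapunov decay expression minus the supply `ν₄ ν₁ ‖w‖²`, minus the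
two Lipschitz slacks `ν₅ (‖Δf‖² - γ_f² ‖e‖²)` and `ν₆ (‖Δh‖² - γ_l² ‖e‖²)`. The LMI makes this form
nonpositive and the Lipschitz bounds make both slacks nonpositive (S-procedure), hence the claim.
-/

open Matrix

namespace Matrix

theorem mulVec_dotProduct {R m n : Type*} [CommSemiring R] [Fintype m] [Fintype n]
    (A : Matrix m n R) (x : n → R) (v : m → R) : A *ᵥ x ⬝ᵥ v = x ⬝ᵥ Aᵀ *ᵥ v := by
  rw [dotProduct_transpose_mulVec, dotProduct_comm]

theorem sumElim_dotProduct_fromBlocks_mulVec {R l m n o : Type*} [NonUnitalNonAssocSemiring R]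
    [Fintype l] [Fintype m] [Fintype n] [Fintype o] (A : Matrix n l R) (B : Matrix n m R)
    (C : Matrix o l R) (D : Matrix o m R) (x : n → R) (y : o → R) (u : l → R) (v : m → R) :
    Sum.elim x y ⬝ᵥ fromBlocks A B C D *ᵥ Sum.elim u v =
      x ⬝ᵥ A *ᵥ u + x ⬝ᵥ B *ᵥ v + (y ⬝ᵥ C *ᵥ u + y ⬝ᵥ D *ᵥ v) := by
  simp only [fromBlocks_mulVec, Sum.elim_comp_inl, Sum.elim_comp_inr, sumElim_dotProduct_sumElim,
    dotProduct_add]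

end Matrix

theorem dotProduct_self_le_of_sqrt_le {ι κ : Type*} [Fintype ι] [Fintype κ] {x : ι → ℝ}
    {e : κ → ℝ} {γ : ℝ} (h : √(x ⬝ᵥ x) ≤ γ * √(e ⬝ᵥ e)) : x ⬝ᵥ x ≤ γ ^ 2 * (e ⬝ᵥ e) := by
  have hx : 0 ≤ x ⬝ᵥ x := by simpa using dotProduct_self_star_nonneg x
  have he : 0 ≤ e ⬝ᵥ e := by simpa using dotProduct_self_star_nonneg e
  calc x ⬝ᵥ x = √(x ⬝ᵥ x) ^ 2 := (Real.sq_sqrt hx).symm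
    _ ≤ (γ * √(e ⬝ᵥ e)) ^ 2 := pow_le_pow_left₀ (Real.sqrt_nonneg _) h 2
    _ = γ ^ 2 * (e ⬝ᵥ e) := by rw [mul_pow, Real.sq_sqrt he]

section ObserverLMI

variable {R ι κ μ : Type*} [CommRing R] [Fintype ι] [Fintype κ] [Fintype μ]
  [DecidableEq ι] [DecidableEq κ] [DecidableEq μ]

def observerLMI (Q P : Matrix ι ι R) (Y : Matrix ι κ R) (Bw : Matrix ι μ R) (Dw : Matrix κ μ R)
    (γf γl ν₁ ν₄ ν₅ ν₆ : R) : Matrix ((ι ⊕ ι) ⊕ (κ ⊕ μ)) ((ι ⊕ ι) ⊕ (κ ⊕ μ)) R :=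
  fromBlocks
    (fromBlocks (Q + (ν₅ * γf ^ 2) • (1 : Matrix ι ι R) + (ν₆ * γl ^ 2) • (1 : Matrix ι ι R)) P P
      (-(ν₅ • (1 : Matrix ι ι R))))
    (fromBlocks (-Y) (P * Bw - Y * Dw) 0 0)
    (fromBlocks (-Yᵀ) 0 (Bwᵀ * P - Dwᵀ * Yᵀ) 0)
    (fromBlocks (-(ν₆ • (1 : Matrix κ κ R))) 0 0 (-(ν₄ * ν₁) • (1 : Matrix μ μ R)))

theorem lyapunov_sub_supply_eq_observerLMI_quadForm {A P Q : Matrix ι ι R} {L Y : Matrix ι κ R}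
    {C : Matrix κ ι R} {Bw : Matrix ι μ R} {Dw : Matrix κ μ R} {γf γl ν₁ ν₄ ν₅ ν₆ : R}
    (hP : Pᵀ = P) (hY : Y = P * L) (hQ : Q = Aᵀ * P + P * A - Cᵀ * Yᵀ - Y * C + ν₄ • P)
    (e Δf : ι → R) (Δh : κ → R) (w : μ → R) {edot : ι → R}
    (hedot : edot = (A - L * C) *ᵥ e + Δf - L *ᵥ Δh + (Bw - L * Dw) *ᵥ w) :
    edot ⬝ᵥ P *ᵥ e + e ⬝ᵥ P *ᵥ edot + ν₄ * (e ⬝ᵥ P *ᵥ e) - ν₄ * ν₁ * (w ⬝ᵥ w) =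
      Sum.elim (Sum.elim e Δf) (Sum.elim Δh w) ⬝ᵥ
          observerLMI Q P Y Bw Dw γf γl ν₁ ν₄ ν₅ ν₆ *ᵥ Sum.elim (Sum.elim e Δf) (Sum.elim Δh w) +
        ν₅ * (Δf ⬝ᵥ Δf - γf ^ 2 * (e ⬝ᵥ e)) + ν₆ * (Δh ⬝ᵥ Δh - γl ^ 2 * (e ⬝ᵥ e)) := by
  subst hedot hQ hY
  simp only [observerLMI, sumElim_dotProduct_fromBlocks_mulVec]
  -- Move every matrix to the right of `⬝ᵥ`, so that `ring` sees matching bilinear terms.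
  simp only [add_mulVec, sub_mulVec, neg_mulVec, smul_mulVec, one_mulVec, zero_mulVec,
    transpose_mul, hP, ← mulVec_mulVec, mulVec_add, mulVec_sub, dotProduct_add, dotProduct_sub,
    add_dotProduct, sub_dotProduct, dotProduct_neg, dotProduct_smul, dotProduct_zero, smul_eq_mul,
    dotProduct_transpose_mulVec, mulVec_dotProduct, transpose_transpose]
  ring

end ObserverLMI

theorem lmi_implies_lyapunov_decay_general {n p m : ℕ}
    (A P : Matrix (Fin n) (Fin n) ℝ) (hP : P.PosDef)
    (L : Matrix (Fin n) (Fin p) ℝ) (C : Matrix (Fin p) (Fin n) ℝ)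
    (Bw : Matrix (Fin n) (Fin m) ℝ) (Dw : Matrix (Fin p) (Fin m) ℝ)
    (γf γl ν₁ ν₄ ν₅ ν₆ : ℝ)
    (hν₅ : 0 ≤ ν₅) (hν₆ : 0 ≤ ν₆)
    (Y : Matrix (Fin n) (Fin p) ℝ) (hY : Y = P * L)
    (Q : Matrix (Fin n) (Fin n) ℝ)
    (hQ : Q = Aᵀ * P + P * A - Cᵀ * Yᵀ - Y * C + ν₄ • P)
    (M : Matrix ((Fin n ⊕ Fin n) ⊕ (Fin p ⊕ Fin m))
      ((Fin n ⊕ Fin n) ⊕ (Fin p ⊕ Fin m)) ℝ)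
    (hM : M = Matrix.fromBlocks
      (Matrix.fromBlocks
        (Q + (ν₅ * γf ^ 2) • (1 : Matrix (Fin n) (Fin n) ℝ)
           + (ν₆ * γl ^ 2) • (1 : Matrix (Fin n) (Fin n) ℝ)) P P
        (-(ν₅ • (1 : Matrix (Fin n) (Fin n) ℝ))))
      (Matrix.fromBlocks (-Y) (P * Bw - Y * Dw) 0 0)
      (Matrix.fromBlocks (-Yᵀ) 0 (Bwᵀ * P - Dwᵀ * Yᵀ) 0)
      (Matrix.fromBlocks (-(ν₆ • (1 : Matrix (Fin p) (Fin p) ℝ))) 0 0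
        (-(ν₄ * ν₁) • (1 : Matrix (Fin m) (Fin m) ℝ))))
    (hLMI : (-M).PosSemidef) :
    ∀ (e Δf : Fin n → ℝ) (Δh : Fin p → ℝ) (w : Fin m → ℝ),
      Real.sqrt (Δf ⬝ᵥ Δf) ≤ γf * Real.sqrt (e ⬝ᵥ e) →
      Real.sqrt (Δh ⬝ᵥ Δh) ≤ γl * Real.sqrt (e ⬝ᵥ e) →
      ∀ edot : Fin n → ℝ,
        edot = (A - L * C).mulVec e + Δf - L.mulVec Δh + (Bw - L * Dw).mulVec w →
        edot ⬝ᵥ P.mulVec e + e ⬝ᵥ P.mulVec edot + ν₄ * (e ⬝ᵥ P.mulVec e) ≤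
          ν₄ * ν₁ * (w ⬝ᵥ w) := by
  intro e Δf Δh w hΔf hΔh edot hedot
  have hPt : Pᵀ = P := hP.isHermitian
  have hM' : M = observerLMI Q P Y Bw Dw γf γl ν₁ ν₄ ν₅ ν₆ := hM
  have hLMI_at := hLMI.dotProduct_mulVec_nonneg (Sum.elim (Sum.elim e Δf) (Sum.elim Δh w))
  simp only [hM', star_trivial, neg_mulVec, dotProduct_neg, neg_nonneg] at hLMI_at
  have hslack_f := mul_nonneg hν₅ (sub_nonneg.mpr (dotProduct_self_le_of_sqrt_le hΔf))
  have hslack_h := mul_nonneg hν₆ (sub_nonneg.mpr (dotProduct_self_le_of_sqrt_le hΔh))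
  linarith [lyapunov_sub_supply_eq_observerLMI_quadForm (γf := γf) (γl := γl) (ν₁ := ν₁)
    (ν₅ := ν₅) (ν₆ := ν₆) hPt hY hQ e Δf Δh w hedot]

/-- If the block matrix inequality (13b) of Theorem 1 holds with `Y = PL`,
then for all `e, Δf, Δh, w` satisfying the Lipschitz bounds, the Lyapunov
decay inequality `edotᵀPe + eᵀPedot + ν₄ eᵀPe ≤ ν₄ν₁‖w‖²` holds. -/
theorem lmi_implies_lyapunov_decay {n p m : ℕ}
    (A P : Matrix (Fin n) (Fin n) ℝ) (hP : P.PosDef)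
    (L : Matrix (Fin n) (Fin p) ℝ) (C : Matrix (Fin p) (Fin n) ℝ)
    (Bw : Matrix (Fin n) (Fin m) ℝ) (Dw : Matrix (Fin p) (Fin m) ℝ)
    (γf γl ν₁ ν₄ ν₅ ν₆ : ℝ)
    (hγf : 0 ≤ γf) (hγl : 0 ≤ γl)
    (hν₁ : 0 ≤ ν₁) (hν₄ : 0 < ν₄) (hν₅ : 0 ≤ ν₅) (hν₆ : 0 ≤ ν₆)
    (Y : Matrix (Fin n) (Fin p) ℝ) (hY : Y = P * L)
    (Q : Matrix (Fin n) (Fin n) ℝ)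
    (hQ : Q = Aᵀ * P + P * A - Cᵀ * Yᵀ - Y * C + ν₄ • P)
    (M : Matrix ((Fin n ⊕ Fin n) ⊕ (Fin p ⊕ Fin m))
      ((Fin n ⊕ Fin n) ⊕ (Fin p ⊕ Fin m)) ℝ)
    (hM : M = Matrix.fromBlocks
      (Matrix.fromBlocks
        (Q + (ν₅ * γf ^ 2) • (1 : Matrix (Fin n) (Fin n) ℝ)
           + (ν₆ * γl ^ 2) • (1 : Matrix (Fin n) (Fin n) ℝ)) P P
        (-(ν₅ • (1 : Matrix (Fin n) (Fin n) ℝ))))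
      (Matrix.fromBlocks (-Y) (P * Bw - Y * Dw) 0 0)
      (Matrix.fromBlocks (-Yᵀ) 0 (Bwᵀ * P - Dwᵀ * Yᵀ) 0)
      (Matrix.fromBlocks (-(ν₆ • (1 : Matrix (Fin p) (Fin p) ℝ))) 0 0
        (-(ν₄ * ν₁) • (1 : Matrix (Fin m) (Fin m) ℝ))))
    (hLMI : (-M).PosSemidef) :
    ∀ (e Δf : Fin n → ℝ) (Δh : Fin p → ℝ) (w : Fin m → ℝ),
      Real.sqrt (Δf ⬝ᵥ Δf) ≤ γf * Real.sqrt (e ⬝ᵥ e) →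
      Real.sqrt (Δh ⬝ᵥ Δh) ≤ γl * Real.sqrt (e ⬝ᵥ e) →
      ∀ edot : Fin n → ℝ,
        edot = (A - L * C).mulVec e + Δf - L.mulVec Δh + (Bw - L * Dw).mulVec w →
        edot ⬝ᵥ P.mulVec e + e ⬝ᵥ P.mulVec edot + ν₄ * (e ⬝ᵥ P.mulVec e) ≤
          ν₄ * ν₁ * (w ⬝ᵥ w) :=
  lmi_implies_lyapunov_decay_general A P hP L C Bw Dw γf γl ν₁ ν₄ ν₅ ν₆ hν₅ hν₆ Y hY Q hQ M hM hLMI
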